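/- Let V be a finite type with n = card V elements and let r : V → V → Prop be an irreflexive relation (a finite directed graph with no self-loops). Let m be the minimum over all vertices w : V of the cardinality of the out-neighborhood {x : V | r w x}. Then for any two vertices v and u such that u is reachable from v along r (i.e., Relation.ReflTransGen r v u holds), there exists a list l : List V such that List.Chain r v l holds, the last element of the list v :: l is u, and the length of l is at most n - m. -/

import Mathlib

/-!
A shortest walk `v = x₀, x₁, …, x_k = u` visits no vertex twice, and no out-neighbour of `v`
other than `x₁` lies on it, since otherwise it could be shortcut. Together with irreflexivity
this makes `{x₀, x₂, …, x_k}` a set of `k` vertices disjoint from the out-neighbourhood of `v`,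
so `k + δ⁺(v) ≤ n`.
-/

open Finset

namespace List

variable {α : Type*} {r : α → α → Prop} {l a b c : List α} {x y : α}

theorem exists_eq_append_cons_append_cons_of_not_nodup (h : ¬l.Nodup) :
    ∃ a b c x, l = a ++ x :: b ++ x :: c := by
  obtain ⟨x, hx⟩ : ∃ x, [x, x] <+ l := by simpa [nodup_iff_sublist] using h
  obtain ⟨l₁, l₂, rfl, hx₁, hx₂⟩ := cons_sublist_iff.1 hx
  obtain ⟨a, b, rfl⟩ := append_of_mem hx₁
  obtain ⟨b', c, rfl⟩ := append_of_mem (singleton_sublist.1 hx₂)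
  exact ⟨a, b ++ b', c, x, by simp⟩

theorem IsChain.shortcut (h : IsChain r (a ++ x :: b ++ y :: c)) (hxy : r x y) :
    IsChain r (a ++ x :: y :: c) := by
  rw [isChain_split] at h
  rw [append_assoc, cons_append, isChain_split] at h
  exact isChain_append_cons_cons.2 ⟨h.1.1, hxy, h.2⟩

theorem IsChain.cut_cycle (h : IsChain r (a ++ x :: b ++ x :: c)) : IsChain r (a ++ x :: c) := by
  rw [isChain_split] at h
  rw [append_assoc, cons_append, isChain_split] at h
  exact isChain_split.2 ⟨h.1.1, h.2⟩

end List

namespace Relation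

variable {α : Type*}

def IsWalk (r : α → α → Prop) (v u : α) (p : List α) : Prop :=
  p.IsChain r ∧ p.head? = some v ∧ p.getLast? = some u

def IsShortestWalk (r : α → α → Prop) (v u : α) (p : List α) : Prop :=
  IsWalk r v u p ∧ ∀ q, IsWalk r v u q → p.length ≤ q.length

variable {r : α → α → Prop} {v u y : α} {p : List α}

theorem ReflTransGen.exists_isWalk (h : ReflTransGen r v u) : ∃ p, IsWalk r v u p := by
  obtain ⟨l, hl, hlast⟩ := List.exists_isChain_cons_of_relationReflTransGen h
  exact ⟨v :: l, hl, rfl, (List.getLast_eq_iff_getLast?_eq_some _).1 hlast⟩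

theorem ReflTransGen.exists_isShortestWalk (h : ReflTransGen r v u) :
    ∃ p, IsShortestWalk r v u p := by
  obtain ⟨p, hp, hmin⟩ := (measure List.length).wf.has_min _ h.exists_isWalk
  exact ⟨p, hp, fun q hq => not_lt.1 (hmin q hq)⟩

theorem IsShortestWalk.nodup (hp : IsShortestWalk r v u p) : p.Nodup := by
  by_contra hdup
  obtain ⟨a, b, c, x, rfl⟩ := List.exists_eq_append_cons_append_cons_of_not_nodup hdup
  obtain ⟨⟨hchain, hhead, hlast⟩, hmin⟩ := hp
  have hcut : IsWalk r v u (a ++ x :: c) := by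
    refine ⟨hchain.cut_cycle, ?_, ?_⟩
    · cases a <;> simpa using hhead
    · rw [← hlast, List.getLast?_append_cons, List.getLast?_append_cons]
  have := hmin _ hcut
  simp only [List.length_append, List.length_cons] at this
  omega

theorem IsShortestWalk.not_rel_of_mem_tail_tail (hp : IsShortestWalk r v u p)
    (hy : y ∈ p.tail.tail) : ¬r v y := by
  intro hvy
  obtain ⟨⟨hchain, hhead, hlast⟩, hmin⟩ := hp
  obtain ⟨l, rfl⟩ := List.head?_eq_some_iff.1 hhead
  obtain ⟨x, l, rfl⟩ := List.exists_cons_of_ne_nil (List.ne_nil_of_mem (List.mem_of_mem_tail hy))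
  obtain ⟨b, c, rfl⟩ := List.append_of_mem hy
  have hcut : IsWalk r v u (v :: y :: c) := by
    refine ⟨List.IsChain.shortcut (a := []) (b := x :: b) hchain hvy, rfl, ?_⟩
    rw [← hlast]
    exact (List.getLast?_append_cons (v :: x :: b) y c).symm
  have := hmin _ hcut
  simp only [List.length_append, List.length_cons] at this
  omega

theorem IsShortestWalk.length_add_card_le [Fintype α] [DecidablePred (r v)]
    (hp : IsShortestWalk r v u p) (hv : ¬r v v) :
    p.length + #{x | r v x} ≤ Fintype.card α + 1 := by
  classical
  obtain ⟨l, rfl⟩ := List.head?_eq_some_iff.1 hp.1.2.1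
  have hnodup : (v :: l.tail).Nodup := hp.nodup.sublist (l.tail_sublist.cons_cons v)
  have hdisj : Disjoint (v :: l.tail).toFinset ({x | r v x} : Finset α) := by
    refine Finset.disjoint_left.2 fun y hy hvy => ?_
    rw [List.mem_toFinset, List.mem_cons] at hy
    rw [Finset.mem_filter_univ] at hvy
    rcases hy with rfl | hy
    · exact hv hvy
    · exact hp.not_rel_of_mem_tail_tail hy hvy
  have := card_le_univ ((v :: l.tail).toFinset ∪ ({x | r v x} : Finset α))
  rw [card_union_of_disjoint hdisj, List.toFinset_card_of_nodup hnodup] at this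
  simp only [List.length_cons, List.length_tail] at this ⊢
  omega

end Relation

theorem reachable_walk_length_le_card_sub_minOutdegree
    {V : Type*} [Fintype V] (r : V → V → Prop) (hirr : Irreflexive r)
    (n : ℕ) (hn : n = Fintype.card V)
    (m : ℕ) (hm : m = ⨅ w : V, Nat.card {x : V | r w x})
    (v u : V) (hreach : Relation.ReflTransGen r v u) :
    ∃ l : List V, List.Chain r v l ∧
      (v :: l).getLast (List.cons_ne_nil v l) = u ∧ l.length ≤ n - m := by
  classical
  obtain ⟨p, hp⟩ := hreach.exists_isShortestWalk
  obtain ⟨l, rfl⟩ := List.head?_eq_some_iff.1 hp.1.2.1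
  have hdeg : m ≤ #{x | r v x} := hm ▸ (ciInf_le (OrderBot.bddBelow _) v).trans_eq (by simp)
  have hlen := hp.length_add_card_le (hirr v)
  refine ⟨l, hp.1.1, (List.getLast_eq_iff_getLast?_eq_some _).2 hp.1.2.2, ?_⟩
  rw [List.length_cons] at hlen
  omega
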